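/- Let V be a nonempty topological space, W a topological space, and G a nontrivial path-connected topological group. Assume the following hypothesis (H): for every group homomorphism h : C(V,G) → G that is range decreasing (h(x) ∈ x(V) for all x) and does not vanish identically on the null-homotopic maps (i.e. there is a null-homotopic x with h(x) ≠ 1), there exists v ∈ V such that h(x) = x(v) for every x ∈ C(V,G) whose coset [x] modulo the null-homotopic maps contains a non-surjective map. Let f : C(V,G) → C(W,G) be a group homomorphism such that: (i) for every w ∈ W there is a null-homotopic x ∈ C(V,G) with f(x)(w) ≠ 1; (ii) for every w ∈ W the map G → G, g ↦ f(c_g)(w), is surjective, where c_g is the constant map with value g; (iii) for every x ∈ C(V,G) with x(v) ≠ 1 for all v ∈ V, we have f(x)(w) ≠ 1 for all w ∈ W. Then there exist maps φ : W → V, γ : W → Aut(G) (abstract group automorphisms of G), and ψ : C(V,G) × W → G such that for every w ∈ W the map x ↦ ψ(x,w) is a group homomorphism with values in the center Z(G), ψ(x,w) = 1 whenever the coset [x] contains a non-surjective map, and f(x)(w) = γ(w)(ψ(x,w)·x(φ(w))) for all x ∈ C(V,G) and w ∈ W. -/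

import Mathlib

/-!
For fixed `w`, the map `g ↦ f (const g) w` is an injective (by (iii)) and surjective (by (ii))
endomorphism of `G`, hence an automorphism `γ_w`. Undoing it gives a homomorphism
`h_w x = γ_w⁻¹ (f x w)` which fixes constants, is range decreasing (if `h_w x ∉ x(V)` then
`x * const (h_w x)⁻¹` never meets `1` while its image vanishes at `w`, against (iii)) and, by (i),
is nontrivial on null-homotopic maps. Hypothesis (H) yields `v` with `h_w = ev_v` on cosets
containing a non-surjective map. Since `G` is path-connected, `x * const g * x⁻¹` lies in the coset
of the non-surjective map `const g`, so conjugation by `h_w x` and by `x v` agree on `G`. Hence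
`ψ(x, w) = (x v)⁻¹ * h_w x` is central, and a central discrepancy between two homomorphisms is
itself a homomorphism.
-/

open ContinuousMap

section CentralDiscrepancy

variable {H G : Type*} [Group H] [Group G]

theorem inv_mul_mem_center_of_conj_eq {a b : G} (h : ∀ g : G, b * g * b⁻¹ = a * g * a⁻¹) :
    a⁻¹ * b ∈ Subgroup.center G := by
  rw [Subgroup.mem_center_iff]
  intro g
  calc g * (a⁻¹ * b) = a⁻¹ * (a * g * a⁻¹) * b := by group
    _ = a⁻¹ * (b * g * b⁻¹) * b := by rw [h]
    _ = a⁻¹ * b * g := by group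

def MonoidHom.invMulOfMemCenter (e h : H →* G) (hc : ∀ x, (e x)⁻¹ * h x ∈ Subgroup.center G) :
    H →* Subgroup.center G :=
  MonoidHom.mk' (fun x => ⟨(e x)⁻¹ * h x, hc x⟩) fun x y => by
    ext
    have hx := Subgroup.mem_center_iff.mp (hc x)
    calc (e (x * y))⁻¹ * h (x * y) = (e y)⁻¹ * ((e x)⁻¹ * h x) * h y := by
          simp only [map_mul]; group
      _ = (e x)⁻¹ * h x * ((e y)⁻¹ * h y) := by rw [hx]; group

theorem MonoidHom.invMulOfMemCenter_apply (e h : H →* G)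
    (hc : ∀ x, (e x)⁻¹ * h x ∈ Subgroup.center G) (x : H) :
    (e.invMulOfMemCenter h hc x : G) = (e x)⁻¹ * h x :=
  rfl

theorem MonoidHom.invMulOfMemCenter_mul_apply (e h : H →* G)
    (hc : ∀ x, (e x)⁻¹ * h x ∈ Subgroup.center G) (x : H) :
    (e.invMulOfMemCenter h hc x : G) * e x = h x := by
  rw [invMulOfMemCenter_apply, ← Subgroup.mem_center_iff.mp (hc x) (e x), mul_inv_cancel_left]

end CentralDiscrepancy

namespace ContinuousMap

section Eval

variable {V M : Type*} [TopologicalSpace V] [TopologicalSpace M] [Monoid M] [ContinuousMul M]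

def evalMonoidHom (v : V) : C(V, M) →* M :=
  (Pi.evalMonoidHom _ v).comp coeFnMonoidHom

end Eval

theorem not_surjective_const {V G : Type*} [TopologicalSpace V] [TopologicalSpace G]
    [Nontrivial G] (g : G) : ¬Function.Surjective ⇑(const V g) := fun hs => by
  obtain ⟨g', hg'⟩ := exists_ne g
  obtain ⟨v, hv⟩ := hs g'
  exact hg' hv.symm

section NullHomotopic

variable {V G : Type*} [TopologicalSpace V] [TopologicalSpace G] [Group G] [IsTopologicalGroup G]

def CosetHasNonsurjective (x : C(V, G)) : Prop :=
  ∃ x₀ : C(V, G), (x₀ * x⁻¹).Homotopic 1 ∧ ¬Function.Surjective ⇑x₀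

theorem homotopic_const_mul_inv_conj [PathConnectedSpace G] (x : C(V, G)) (g : G) :
    (const V g * (x * const V g * x⁻¹)⁻¹).Homotopic 1 := by
  obtain ⟨p⟩ := PathConnectedSpace.joined g 1
  refine ⟨{ toFun := fun q => p q.1 * x q.2 * (p q.1)⁻¹ * (x q.2)⁻¹
            map_zero_left := fun v => ?_
            map_one_left := fun v => ?_ }⟩
  · simp [mul_assoc]
  · simp

theorem cosetHasNonsurjective_conj_const [PathConnectedSpace G] [Nontrivial G]
    (x : C(V, G)) (g : G) : CosetHasNonsurjective (x * const V g * x⁻¹) :=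
  ⟨const V g, homotopic_const_mul_inv_conj x g, not_surjective_const g⟩

theorem inv_apply_mul_mem_center [PathConnectedSpace G] [Nontrivial G] {h : C(V, G) →* G}
    {v : V} (hconst : ∀ g, h (const V g) = g)
    (hv : ∀ x, CosetHasNonsurjective x → h x = x v) (x : C(V, G)) :
    (x v)⁻¹ * h x ∈ Subgroup.center G := by
  refine inv_mul_mem_center_of_conj_eq fun g => ?_
  have hconj := hv _ (cosetHasNonsurjective_conj_const x g)
  rwa [map_mul, map_mul, map_inv, hconst] at hconj

end NullHomotopic

section ConstAut

variable {V W G : Type*} [TopologicalSpace V] [TopologicalSpace W] [TopologicalSpace G] [Group G]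
  [IsTopologicalGroup G] (f : C(V, G) →* C(W, G))

def constEvalHom (w : W) : G →* G :=
  MonoidHom.mk' (fun g => f (const V g) w) fun a b => by
    change f (const V a * const V b) w = _
    rw [map_mul, mul_apply]

theorem constEvalHom_injective
    (h3 : ∀ x : C(V, G), (∀ v : V, x v ≠ 1) → ∀ w : W, f x w ≠ 1) (w : W) :
    Function.Injective (constEvalHom f w) := by
  refine (injective_iff_map_eq_one _).mpr fun g hg => ?_
  by_contra hg1
  exact h3 (const V g) (fun _ => hg1) w hg

variable {f} (h2 : ∀ w : W, Function.Surjective (fun g : G => f (const V g) w))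
  (h3 : ∀ x : C(V, G), (∀ v : V, x v ≠ 1) → ∀ w : W, f x w ≠ 1)

noncomputable def constAut (w : W) : MulAut G :=
  MulEquiv.ofBijective (constEvalHom f w) ⟨constEvalHom_injective f h3 w, h2 w⟩

theorem constAut_apply (w : W) (g : G) : constAut h2 h3 w g = f (const V g) w :=
  rfl

noncomputable def untwistedEval (w : W) : C(V, G) →* G :=
  (constAut h2 h3 w).symm.toMonoidHom.comp ((evalMonoidHom w).comp f)

theorem constAut_untwistedEval (w : W) (x : C(V, G)) :
    constAut h2 h3 w (untwistedEval h2 h3 w x) = f x w :=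
  MulEquiv.apply_symm_apply _ _

theorem untwistedEval_const (w : W) (g : G) : untwistedEval h2 h3 w (const V g) = g :=
  (constAut h2 h3 w).symm_apply_apply g

theorem untwistedEval_mem_range (w : W) (x : C(V, G)) :
    untwistedEval h2 h3 w x ∈ Set.range ⇑x := by
  by_contra hx
  set a := untwistedEval h2 h3 w x
  refine h3 (x * const V a⁻¹) (fun v hv => hx ⟨v, mul_inv_eq_one.mp hv⟩) w ?_
  change f (x * (const V a)⁻¹) w = 1
  rw [map_mul, map_inv, mul_apply, inv_apply, ← constAut_apply h2 h3, constAut_untwistedEval,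
    mul_inv_cancel]

theorem exists_homotopic_one_untwistedEval_ne_one
    (h1 : ∀ w : W, ∃ x : C(V, G), x.Homotopic 1 ∧ f x w ≠ 1) (w : W) :
    ∃ x : C(V, G), x.Homotopic 1 ∧ untwistedEval h2 h3 w x ≠ 1 := by
  obtain ⟨x, hx, hfx⟩ := h1 w
  refine ⟨x, hx, fun h => hfx ?_⟩
  rw [← constAut_untwistedEval h2 h3, h, map_one]

end ConstAut

end ContinuousMap

theorem weighted_composition_representation_general {V W G : Type*} [TopologicalSpace V]
    [TopologicalSpace W] [TopologicalSpace G] [Group G] [IsTopologicalGroup G]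
    [PathConnectedSpace G] [Nontrivial G]
    (hH : ∀ h : C(V, G) →* G, (∀ x : C(V, G), h x ∈ Set.range ⇑x) →
      (∃ x : C(V, G), x.Homotopic 1 ∧ h x ≠ 1) →
      ∃ v : V, ∀ x : C(V, G),
        (∃ x₀ : C(V, G), (x₀ * x⁻¹).Homotopic 1 ∧ ¬Function.Surjective ⇑x₀) → h x = x v)
    (f : C(V, G) →* C(W, G))
    (h1 : ∀ w : W, ∃ x : C(V, G), x.Homotopic 1 ∧ f x w ≠ 1)
    (h2 : ∀ w : W, Function.Surjective (fun g : G => f (ContinuousMap.const V g) w))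
    (h3 : ∀ x : C(V, G), (∀ v : V, x v ≠ 1) → ∀ w : W, f x w ≠ 1) :
    ∃ (φ : W → V) (γ : W → MulAut G) (ψ : C(V, G) → W → G),
      (∀ w : W, ∀ x y : C(V, G), ψ (x * y) w = ψ x w * ψ y w) ∧
      (∀ (w : W) (x : C(V, G)), ψ x w ∈ Subgroup.center G) ∧
      (∀ (w : W) (x : C(V, G)),
        (∃ x₀ : C(V, G), (x₀ * x⁻¹).Homotopic 1 ∧ ¬Function.Surjective ⇑x₀) → ψ x w = 1) ∧
      (∀ (x : C(V, G)) (w : W), f x w = γ w (ψ x w * x (φ w))) := by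
  choose φ hφ using fun w => hH (untwistedEval h2 h3 w) (untwistedEval_mem_range h2 h3 w)
    (exists_homotopic_one_untwistedEval_ne_one h2 h3 h1 w)
  have hcenter (w : W) := inv_apply_mul_mem_center (untwistedEval_const h2 h3 w) (hφ w)
  let ψ (w : W) := (evalMonoidHom (φ w)).invMulOfMemCenter (untwistedEval h2 h3 w) (hcenter w)
  refine ⟨φ, constAut h2 h3, fun x w => ψ w x, fun w x y => congrArg Subtype.val (map_mul (ψ w) x y),
    fun w x => (ψ w x).2, fun w x hx => ?_, fun x w => ?_⟩
  · change (x (φ w))⁻¹ * untwistedEval h2 h3 w x = 1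
    rw [hφ w x hx, inv_mul_cancel]
  · exact (constAut_untwistedEval h2 h3 w x).symm.trans
      (congrArg _ (MonoidHom.invMulOfMemCenter_mul_apply _ _ (hcenter w) x).symm)

/-- Let `V` be nonempty, `W` a space, `G` a nontrivial path-connected
topological group. Assume hypothesis (H): every range decreasing group homomorphism
`h : C(V,G) → G` not vanishing identically on null-homotopic maps agrees with an evaluation on
all cosets containing a non-surjective map. If `f : C(V,G) → C(W,G)` is a group homomorphism
satisfying (i), (ii), (iii), then `f` is a weighted composition operator:
`f x w = γ(w) (ψ(x,w) * x (φ w))` with `γ(w) ∈ Aut(G)` and `ψ(·,w)` a central-valued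
homomorphism vanishing on cosets containing a non-surjective map. -/
theorem weighted_composition_representation {V W G : Type*} [TopologicalSpace V] [Nonempty V]
    [TopologicalSpace W] [TopologicalSpace G] [Group G] [IsTopologicalGroup G]
    [PathConnectedSpace G] [Nontrivial G]
    (hH : ∀ h : C(V, G) →* G, (∀ x : C(V, G), h x ∈ Set.range ⇑x) →
      (∃ x : C(V, G), x.Homotopic 1 ∧ h x ≠ 1) →
      ∃ v : V, ∀ x : C(V, G),
        (∃ x₀ : C(V, G), (x₀ * x⁻¹).Homotopic 1 ∧ ¬Function.Surjective ⇑x₀) → h x = x v)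
    (f : C(V, G) →* C(W, G))
    (h1 : ∀ w : W, ∃ x : C(V, G), x.Homotopic 1 ∧ f x w ≠ 1)
    (h2 : ∀ w : W, Function.Surjective (fun g : G => f (ContinuousMap.const V g) w))
    (h3 : ∀ x : C(V, G), (∀ v : V, x v ≠ 1) → ∀ w : W, f x w ≠ 1) :
    ∃ (φ : W → V) (γ : W → MulAut G) (ψ : C(V, G) → W → G),
      (∀ w : W, ∀ x y : C(V, G), ψ (x * y) w = ψ x w * ψ y w) ∧
      (∀ (w : W) (x : C(V, G)), ψ x w ∈ Subgroup.center G) ∧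
      (∀ (w : W) (x : C(V, G)),
        (∃ x₀ : C(V, G), (x₀ * x⁻¹).Homotopic 1 ∧ ¬Function.Surjective ⇑x₀) → ψ x w = 1) ∧
      (∀ (x : C(V, G)) (w : W), f x w = γ w (ψ x w * x (φ w))) :=
  weighted_composition_representation_general hH f h1 h2 h3
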